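/- arXiv:2112.11885 — 2 statements merged into one kernel-verified Lean document; each statement's English description precedes it below -/
import Mathlib

section
/- The monic Meixner polynomials satisfy the convolution identity 𝒮_n(x+y; a+b; p) = Σ_{k=0}^n C(n,k) 𝒮_k(x; a; p) 𝒮_{n-k}(y; b; p) for all x, y ∈ ℕ, a, b > 0, p ∈ (0,1), and n ∈ ℕ. -/
/-!
Let `c = 1 - 1/p`. Writing `(x)_k = k! C(x,k)` and `(a+k)^{(m)} = (-1)^m m! C(-a-k, m)`, the
exponential generating function of `𝒮_n(x; a; p)` is
`∑_k C(x,k) t^k (1 - t/c)^{-a-k} = (1 - t/c)^{-a} (1 + t/(1 - t/c))^x`.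
This is multiplicative in the pair `(a, x)`, and the convolution identity is the comparison of
the coefficients of `tⁿ/n!` in the product of two exponential generating functions.
-/

/-- Rising factorial (Pochhammer symbol) `(a)^{(k)} = a(a+1)⋯(a+k-1)`. -/
noncomputable def risingFact (a : ℝ) (k : ℕ) : ℝ := ∏ i ∈ Finset.range k, (a + i)

/-- The monic Meixner polynomial
`𝒮_n(x;a;p) = ∑_{k=0}^n C(n,k) (1-1/p)^{k-n} (a+k)^{(n-k)} (x)_k`. -/
noncomputable def meixner (n : ℕ) (a p : ℝ) (x : ℕ) : ℝ :=
  ∑ k ∈ Finset.range (n + 1),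
    (n.choose k : ℝ) * (1 - 1 / p) ^ ((k : ℤ) - (n : ℤ)) *
      risingFact (a + k) (n - k) * (x.descFactorial k : ℝ)

open PowerSeries Finset Nat

section BinomialPowerSeries

variable {R : Type*} [CommRing R] [BinomialRing R]

/-- The formal power series `(1 + e t) ^ c`. -/
noncomputable def binomialPowerSeries (e c : R) : PowerSeries R :=
  mk fun m => e ^ m * Ring.choose c m

@[simp]
lemma coeff_binomialPowerSeries (e c : R) (m : ℕ) :
    coeff m (binomialPowerSeries e c) = e ^ m * Ring.choose c m :=
  coeff_mk _ _

lemma binomialPowerSeries_zero (e : R) : binomialPowerSeries e 0 = 1 := by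
  ext m
  rw [coeff_binomialPowerSeries, Ring.choose_zero_ite, coeff_one]
  split_ifs with hm <;> simp [hm]

lemma binomialPowerSeries_add (e c c' : R) :
    binomialPowerSeries e (c + c') = binomialPowerSeries e c * binomialPowerSeries e c' := by
  ext m
  rw [coeff_mul, coeff_binomialPowerSeries, Ring.add_choose_eq m (Commute.all c c'), mul_sum]
  refine sum_congr rfl fun ij hij => ?_
  rw [HasAntidiagonal.mem_antidiagonal] at hij
  simp only [coeff_binomialPowerSeries, ← hij, pow_add]
  ring

lemma binomialPowerSeries_pow (e c : R) (k : ℕ) :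
    binomialPowerSeries e c ^ k = binomialPowerSeries e (k * c) := by
  induction k with
  | zero => simp [binomialPowerSeries_zero]
  | succ k ih =>
    rw [pow_succ, ih, ← binomialPowerSeries_add, Nat.cast_succ, add_mul, one_mul]

lemma binomialPowerSeries_mul_X_mul_pow (e c : R) (k : ℕ) :
    binomialPowerSeries e c * (X * binomialPowerSeries e (-1)) ^ k
      = X ^ k * binomialPowerSeries e (c - k) := by
  rw [mul_pow, binomialPowerSeries_pow, mul_left_comm, ← binomialPowerSeries_add, mul_neg_one,
    ← sub_eq_add_neg]

lemma coeff_binomialPowerSeries_mul_one_add_X_mul_pow (e c : R) (x n : ℕ) :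
    coeff n (binomialPowerSeries e c * (1 + X * binomialPowerSeries e (-1)) ^ x)
      = ∑ k ∈ range (n + 1), x.choose k * (e ^ (n - k) * Ring.choose (c - k) (n - k)) := by
  set T : ℕ → R := fun k => x.choose k * (e ^ (n - k) * Ring.choose (c - k) (n - k))
  rw [add_comm, add_pow, mul_sum, map_sum]
  simp only [one_pow, mul_one, ← mul_assoc, binomialPowerSeries_mul_X_mul_pow,
    ← map_natCast (C (R := R)), coeff_mul_C, coeff_X_pow_mul', coeff_binomialPowerSeries]
  calc _ = ∑ k ∈ range (x + 1) with k ≤ n, T k := by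
        rw [sum_filter]
        refine sum_congr rfl fun k _ => ?_
        split_ifs <;> simp [T, mul_comm]
    _ = ∑ k ∈ range (n + 1) with k ≤ x, T k := by
        congr 1
        ext k
        simp only [mem_filter, mem_range]
        omega
    _ = ∑ k ∈ range (n + 1), T k := by
        rw [sum_filter]
        refine sum_congr rfl fun k _ => ?_
        split_ifs with hk
        · rfl
        · simp [T, Nat.choose_eq_zero_of_lt (not_le.mp hk)]

end BinomialPowerSeries

lemma factorial_mul_coeff_mul {R : Type*} [CommSemiring R] (F G : PowerSeries R) (n : ℕ) :
    n ! * coeff n (F * G) = ∑ k ∈ range (n + 1),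
      n.choose k * (k ! * coeff k F) * ((n - k)! * coeff (n - k) G) := by
  rw [coeff_mul, Nat.sum_antidiagonal_eq_sum_range_succ_mk, mul_sum]
  refine sum_congr rfl fun k hk => ?_
  rw [← Nat.choose_mul_factorial_mul_factorial (Nat.lt_succ_iff.mp (mem_range.mp hk))]
  push_cast
  ring

lemma risingFact_eq_ascPochhammer_eval (c : ℝ) (m : ℕ) :
    risingFact c m = (ascPochhammer ℝ m).eval c := by
  induction m with
  | zero => simp [risingFact]
  | succ m ih => rw [risingFact, prod_range_succ, ← risingFact, ih, ascPochhammer_succ_eval]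

lemma risingFact_eq_neg_one_pow_mul_factorial_mul_choose (c : ℝ) (m : ℕ) :
    risingFact c m = (-1) ^ m * m ! * Ring.choose (-c) m := by
  rw [Ring.choose_neg', risingFact_eq_ascPochhammer_eval,
    ← Polynomial.ascPochhammer_smeval_eq_eval, ← Ring.factorial_nsmul_multichoose_eq_ascPochhammer,
    Units.smul_def, zsmul_eq_mul, Int.cast_negOnePow_natCast, nsmul_eq_mul, ← mul_assoc,
    mul_comm _ ((-1 : ℝ) ^ m), ← mul_assoc, ← mul_pow]
  norm_num

noncomputable def meixnerEGF (a p : ℝ) (x : ℕ) : PowerSeries ℝ :=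
  binomialPowerSeries (-(1 - 1 / p)⁻¹) (-a) *
    (1 + X * binomialPowerSeries (-(1 - 1 / p)⁻¹) (-1)) ^ x

lemma meixner_eq_factorial_mul_coeff_meixnerEGF (n : ℕ) (a p : ℝ) (x : ℕ) :
    meixner n a p x = n ! * coeff n (meixnerEGF a p x) := by
  rw [meixnerEGF, coeff_binomialPowerSeries_mul_one_add_X_mul_pow, meixner, mul_sum]
  refine sum_congr rfl fun k hk => ?_
  have hkn : k ≤ n := Nat.lt_succ_iff.mp (mem_range.mp hk)
  have hzpow : (1 - 1 / p) ^ ((k : ℤ) - n) = ((1 - 1 / p)⁻¹) ^ (n - k) := by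
    rw [show (k : ℤ) - n = -((n - k : ℕ) : ℤ) by omega, zpow_neg, zpow_natCast, inv_pow]
  rw [hzpow, risingFact_eq_neg_one_pow_mul_factorial_mul_choose,
    Nat.descFactorial_eq_factorial_mul_choose, ← Nat.choose_mul_factorial_mul_factorial hkn,
    neg_add', neg_pow ((1 - 1 / p)⁻¹)]
  push_cast
  ring

lemma meixnerEGF_add (a b p : ℝ) (x y : ℕ) :
    meixnerEGF (a + b) p (x + y) = meixnerEGF a p x * meixnerEGF b p y := by
  simp only [meixnerEGF, neg_add, binomialPowerSeries_add, pow_add]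
  ring

theorem stmt4_general (a b p : ℝ)
    (x y n : ℕ) :
    meixner n (a + b) p (x + y)
      = ∑ k ∈ Finset.range (n + 1),
          (n.choose k : ℝ) * meixner k a p x * meixner (n - k) b p y := by
  simp only [meixner_eq_factorial_mul_coeff_meixnerEGF, meixnerEGF_add, factorial_mul_coeff_mul]

/-- convolution identity for the monic Meixner polynomials:
`𝒮_n(x+y; a+b; p) = ∑_{k=0}^n C(n,k) 𝒮_k(x;a;p) 𝒮_{n-k}(y;b;p)`. -/
theorem stmt4 (a b p : ℝ) (ha : 0 < a) (hb : 0 < b) (hp : p ∈ Set.Ioo (0 : ℝ) 1)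
    (x y n : ℕ) :
    meixner n (a + b) p (x + y)
      = ∑ k ∈ Finset.range (n + 1),
          (n.choose k : ℝ) * meixner k a p x * meixner (n - k) b p y :=
  stmt4_general a b p x y n
end

section
/- Define on tuples the kernel-sum measure λ_n on E^n (E a finite set with finite measure α) by λ_n(B) = Σ_{σ ∈ Σ_n} (∏_{A∈σ} (|A|-1)!) ∫ (1_B)_σ dα^{⊗|σ|}. Then λ_{n+1} = λ_n k_{n,n+1}, where k_{n,n+1}(x_1,...,x_n; B) = ∫ 1_B(x_1,...,x_n,y) α(dy) + Σ_{i=1}^n 1_B(x_1,...,x_n,x_i). -/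
/-!
Sort the partitions of `{1, …, n+1}` by what happens to `n+1`. Either it is a singleton block
added to a partition `Q` of `{1, …, n}`: the weight does not change, and the new block carries
its own `α`-distributed value, which gives the term `∫ 1_B(x, y) α(dy)`. Or it joins a block
`A` of `Q`: the weight `(|A|-1)!` becomes `|A|!`, and the extra factor `|A|` counts the
coordinates `x_i`, `i ∈ A`, whose common value the new coordinate copies, which gives
`∑_i 1_B(x, x_i)`.
-/

attribute [local instance] Classical.propDecidable

/-- The set partitions of `Fin n`, encoded as finsets of nonempty, pairwise disjoint blocks
covering `Fin n` (each element lies in exactly one block). -/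
noncomputable def SetPartitions (n : ℕ) : Finset (Finset (Finset (Fin n))) :=
  Finset.univ.filter (fun P => (∅ ∉ P) ∧ ∀ k : Fin n, ∃! A, A ∈ P ∧ k ∈ A)

/-- The block of the partition `P` containing `k` (the union of the blocks containing `k`,
which for a genuine partition is the unique such block). -/
noncomputable def blockOf {n : ℕ} (P : Finset (Finset (Fin n))) (k : Fin n) :
    Finset (Fin n) :=
  (P.filter (fun A => k ∈ A)).sup id

/-- The integral `∫ f dλ_n` for the measure
`λ_n(B) = ∑_{σ ∈ Σ_n} (∏_{A ∈ σ} (|A|-1)!) ∫ (1_B)_σ dα^{⊗|σ|}` on `E^n`: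
for each partition `P`, the inner sum runs over assignments `J` of a point of `E` to each
block of `P`, weighted by `∏_{A ∈ P} α(J A)`, and `f` is evaluated at the tuple obtained by
giving every coordinate the value assigned to its block. -/
noncomputable def lamInt {E : Type*} [Fintype E] [Nonempty E]
    (α : E → ℝ) (n : ℕ) (f : (Fin n → E) → ℝ) : ℝ :=
  ∑ P ∈ SetPartitions n,
    (∏ A ∈ P, ((A.card - 1).factorial : ℝ)) *
      ∑ J ∈ P.pi (fun _ => (Finset.univ : Finset E)),
        (∏ A ∈ P.attach, α (J A.1 A.2)) *
          f (fun k => if h : blockOf P k ∈ P then J (blockOf P k) h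
                      else Classical.arbitrary E)

open Finset

def IsSetPartition {m : ℕ} (P : Finset (Finset (Fin m))) : Prop :=
  ∅ ∉ P ∧ ∀ k : Fin m, ∃! A, A ∈ P ∧ k ∈ A

lemma mem_setPartitions {m : ℕ} {P : Finset (Finset (Fin m))} :
    P ∈ SetPartitions m ↔ IsSetPartition P := by
  simp [SetPartitions, IsSetPartition]

namespace IsSetPartition

variable {m : ℕ} {P P' : Finset (Finset (Fin m))} {A : Finset (Fin m)} {k : Fin m}

lemma blockOf_eq (hP : IsSetPartition P) (hA : A ∈ P) (hk : k ∈ A) : blockOf P k = A := by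
  obtain ⟨C, -, hC⟩ := hP.2 k
  have hfilter : P.filter (k ∈ ·) = {A} := by
    ext D
    simp only [mem_filter, mem_singleton]
    exact ⟨fun hD => (hC D hD).trans (hC A ⟨hA, hk⟩).symm, fun hD => hD ▸ ⟨hA, hk⟩⟩
  rw [blockOf, hfilter, sup_singleton, id]

lemma blockOf_mem (hP : IsSetPartition P) (k : Fin m) : blockOf P k ∈ P := by
  obtain ⟨C, ⟨hC, hkC⟩, -⟩ := hP.2 k
  rwa [hP.blockOf_eq hC hkC]

lemma mem_blockOf (hP : IsSetPartition P) (k : Fin m) : k ∈ blockOf P k := by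
  obtain ⟨C, ⟨hC, hkC⟩, -⟩ := hP.2 k
  rwa [hP.blockOf_eq hC hkC]

lemma nonempty_of_mem (hP : IsSetPartition P) (hA : A ∈ P) : A.Nonempty :=
  nonempty_iff_ne_empty.mpr fun h => hP.1 (h ▸ hA)

lemma blockOf_eq_blockOf (hP : IsSetPartition P) {j : Fin m} (hj : j ∈ blockOf P k) :
    blockOf P j = blockOf P k :=
  hP.blockOf_eq (hP.blockOf_mem k) hj

lemma subset_of_blockOf_eq (hP : IsSetPartition P) (hP' : IsSetPartition P')
    (h : ∀ k, blockOf P k = blockOf P' k) : P ⊆ P' := fun A hA => by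
  obtain ⟨k, hk⟩ := hP.nonempty_of_mem hA
  rw [← hP.blockOf_eq hA hk, h]
  exact hP'.blockOf_mem k

lemma ext (hP : IsSetPartition P) (hP' : IsSetPartition P')
    (h : ∀ k, blockOf P k = blockOf P' k) : P = P' :=
  (hP.subset_of_blockOf_eq hP' h).antisymm (hP'.subset_of_blockOf_eq hP fun k => (h k).symm)

lemma sum_sum_blocks {M : Type*} [AddCommMonoid M] (hP : IsSetPartition P) (t : Fin m → M) :
    ∑ A ∈ P, ∑ i ∈ A, t i = ∑ i, t i := by
  rw [← sum_fiberwise_of_maps_to (g := blockOf P) (fun i _ => hP.blockOf_mem i) t]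
  refine sum_congr rfl fun A hA => sum_congr ?_ fun _ _ => rfl
  ext i
  simpa using ⟨fun hi => hP.blockOf_eq hA hi, fun hi => hi ▸ hP.mem_blockOf i⟩

end IsSetPartition

section Blocks

variable {n : ℕ} {A B : Finset (Fin n)} {C : Finset (Fin (n + 1))} {j : Fin n}

noncomputable def liftBlock (A : Finset (Fin n)) : Finset (Fin (n + 1)) := A.map Fin.castSuccEmb

noncomputable def lowerBlock (C : Finset (Fin (n + 1))) : Finset (Fin n) :=
  C.preimage Fin.castSucc (Fin.castSucc_injective n).injOn

@[simp] lemma castSucc_mem_liftBlock : j.castSucc ∈ liftBlock A ↔ j ∈ A := by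
  simp [liftBlock]

@[simp] lemma last_notMem_liftBlock : Fin.last n ∉ liftBlock A := by
  simp [liftBlock, Fin.castSucc_ne_last]

@[simp] lemma mem_lowerBlock : j ∈ lowerBlock C ↔ j.castSucc ∈ C := by
  simp [lowerBlock]

@[simp] lemma lowerBlock_liftBlock (A : Finset (Fin n)) : lowerBlock (liftBlock A) = A :=
  preimage_map _ _

lemma liftBlock_injective : Function.Injective (liftBlock (n := n)) :=
  Function.LeftInverse.injective lowerBlock_liftBlock

@[simp] lemma lowerBlock_insert_last : lowerBlock (insert (Fin.last n) C) = lowerBlock C := by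
  ext j
  simp [Fin.castSucc_ne_last]

lemma liftBlock_lowerBlock (h : Fin.last n ∉ C) : liftBlock (lowerBlock C) = C := by
  ext k
  cases k using Fin.lastCases <;> simp [h]

lemma insert_last_liftBlock_lowerBlock (h : Fin.last n ∈ C) :
    insert (Fin.last n) (liftBlock (lowerBlock C)) = C := by
  ext k
  cases k using Fin.lastCases <;> simp [h, Fin.castSucc_ne_last]

noncomputable def liftBlockJoin (A B : Finset (Fin n)) : Finset (Fin (n + 1)) :=
  if B = A then insert (Fin.last n) (liftBlock B) else liftBlock B

@[simp] lemma castSucc_mem_liftBlockJoin : j.castSucc ∈ liftBlockJoin A B ↔ j ∈ B := by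
  unfold liftBlockJoin
  split_ifs <;> simp [Fin.castSucc_ne_last]

@[simp] lemma last_mem_liftBlockJoin : Fin.last n ∈ liftBlockJoin A B ↔ B = A := by
  unfold liftBlockJoin
  split_ifs <;> simp [*]

@[simp] lemma lowerBlock_liftBlockJoin (A B : Finset (Fin n)) :
    lowerBlock (liftBlockJoin A B) = B := by
  unfold liftBlockJoin
  split_ifs <;> simp

lemma card_liftBlockJoin :
    (liftBlockJoin A B).card = if B = A then B.card + 1 else B.card := by
  unfold liftBlockJoin
  split_ifs <;> simp [liftBlock]

end Blocks

section Extend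

variable {n : ℕ} {Q : Finset (Finset (Fin n))} {A : Finset (Fin n)}

noncomputable def extendNew (Q : Finset (Finset (Fin n))) : Finset (Finset (Fin (n + 1))) :=
  insert {Fin.last n} (Q.image liftBlock)

noncomputable def extendJoin (Q : Finset (Finset (Fin n))) (A : Finset (Fin n)) :
    Finset (Finset (Fin (n + 1))) :=
  Q.image (liftBlockJoin A)

noncomputable def restrictPartition (P : Finset (Finset (Fin (n + 1)))) :
    Finset (Finset (Fin n)) :=
  univ.image fun j : Fin n => lowerBlock (blockOf P j.castSucc)

lemma singleton_last_notMem_image_liftBlock :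
    {Fin.last n} ∉ Q.image liftBlock := by
  simp only [mem_image, not_exists, not_and]
  exact fun B _ h => last_notMem_liftBlock (h ▸ mem_singleton_self _)

lemma isSetPartition_extendNew (hQ : IsSetPartition Q) : IsSetPartition (extendNew Q) := by
  refine ⟨?_, fun k => ?_⟩
  · simpa [extendNew, eq_comm (a := ∅), liftBlock] using hQ.1
  cases k using Fin.lastCases with
  | last => exact ⟨{Fin.last n}, by simp [extendNew], by simp [extendNew]⟩
  | cast j =>
    refine ⟨liftBlock (blockOf Q j), ⟨mem_insert_of_mem (mem_image_of_mem _ (hQ.blockOf_mem j)),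
      by simp [hQ.mem_blockOf]⟩, ?_⟩
    simp only [extendNew, mem_insert, mem_image]
    rintro C ⟨rfl | ⟨B, hB, rfl⟩, hj⟩
    · simp [Fin.castSucc_ne_last] at hj
    · rw [hQ.blockOf_eq hB (castSucc_mem_liftBlock.mp hj)]

lemma blockOf_extendNew_last (hQ : IsSetPartition Q) :
    blockOf (extendNew Q) (Fin.last n) = {Fin.last n} :=
  (isSetPartition_extendNew hQ).blockOf_eq (mem_insert_self _ _) (mem_singleton_self _)

lemma blockOf_extendNew_castSucc (hQ : IsSetPartition Q) (j : Fin n) :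
    blockOf (extendNew Q) j.castSucc = liftBlock (blockOf Q j) :=
  (isSetPartition_extendNew hQ).blockOf_eq
    (mem_insert_of_mem (mem_image_of_mem _ (hQ.blockOf_mem j))) (by simp [hQ.mem_blockOf])

lemma isSetPartition_extendJoin (hQ : IsSetPartition Q) (hA : A ∈ Q) :
    IsSetPartition (extendJoin Q A) := by
  refine ⟨?_, fun k => ?_⟩
  · simp only [extendJoin, mem_image, not_exists, not_and]
    intro B hB h
    obtain ⟨j, hj⟩ := hQ.nonempty_of_mem hB
    simpa [h] using castSucc_mem_liftBlockJoin (A := A).mpr hj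
  cases k using Fin.lastCases with
  | last =>
    refine ⟨liftBlockJoin A A, ⟨mem_image_of_mem _ hA, by simp⟩, ?_⟩
    simp only [extendJoin, mem_image]
    rintro C ⟨⟨B, -, rfl⟩, h⟩
    rw [last_mem_liftBlockJoin.mp h]
  | cast j =>
    refine ⟨liftBlockJoin A (blockOf Q j),
      ⟨mem_image_of_mem _ (hQ.blockOf_mem j), by simp [hQ.mem_blockOf]⟩, ?_⟩
    simp only [extendJoin, mem_image]
    rintro C ⟨⟨B, hB, rfl⟩, hj⟩
    rw [hQ.blockOf_eq hB (castSucc_mem_liftBlockJoin.mp hj)]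

lemma blockOf_extendJoin_last (hQ : IsSetPartition Q) (hA : A ∈ Q) :
    blockOf (extendJoin Q A) (Fin.last n) = liftBlockJoin A A :=
  (isSetPartition_extendJoin hQ hA).blockOf_eq (mem_image_of_mem _ hA) (by simp)

lemma blockOf_extendJoin_castSucc (hQ : IsSetPartition Q) (hA : A ∈ Q) (j : Fin n) :
    blockOf (extendJoin Q A) j.castSucc = liftBlockJoin A (blockOf Q j) :=
  (isSetPartition_extendJoin hQ hA).blockOf_eq (mem_image_of_mem _ (hQ.blockOf_mem j))
    (by simp [hQ.mem_blockOf])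

end Extend

section Restrict

variable {n : ℕ} {P : Finset (Finset (Fin (n + 1)))} {Q : Finset (Finset (Fin n))}
  {A : Finset (Fin n)}

lemma isSetPartition_restrictPartition (hP : IsSetPartition P) :
    IsSetPartition (restrictPartition P) := by
  refine ⟨?_, fun j => ⟨lowerBlock (blockOf P j.castSucc),
    ⟨mem_image_of_mem _ (mem_univ j), by simp [hP.mem_blockOf]⟩, ?_⟩⟩
  · simp only [restrictPartition, mem_image, mem_univ, true_and, not_exists]
    intro j h
    simpa [h] using mem_lowerBlock.mpr (hP.mem_blockOf j.castSucc)
  · rintro C ⟨hC, hj⟩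
    obtain ⟨i, -, rfl⟩ := mem_image.mp hC
    rw [hP.blockOf_eq_blockOf (mem_lowerBlock.mp hj)]

lemma blockOf_restrictPartition (hP : IsSetPartition P) (j : Fin n) :
    blockOf (restrictPartition P) j = lowerBlock (blockOf P j.castSucc) :=
  (isSetPartition_restrictPartition hP).blockOf_eq (mem_image_of_mem _ (mem_univ j))
    (by simp [hP.mem_blockOf])

lemma restrictPartition_extendNew (hQ : IsSetPartition Q) :
    restrictPartition (extendNew Q) = Q :=
  (isSetPartition_restrictPartition (isSetPartition_extendNew hQ)).ext hQ fun j => by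
    rw [blockOf_restrictPartition (isSetPartition_extendNew hQ), blockOf_extendNew_castSucc hQ,
      lowerBlock_liftBlock]

lemma restrictPartition_extendJoin (hQ : IsSetPartition Q) (hA : A ∈ Q) :
    restrictPartition (extendJoin Q A) = Q :=
  (isSetPartition_restrictPartition (isSetPartition_extendJoin hQ hA)).ext hQ fun j => by
    rw [blockOf_restrictPartition (isSetPartition_extendJoin hQ hA),
      blockOf_extendJoin_castSucc hQ hA, lowerBlock_liftBlockJoin]

lemma liftBlockJoin_self_ne_singleton (hA : A.Nonempty) : liftBlockJoin A A ≠ {Fin.last n} := by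
  obtain ⟨j, hj⟩ := hA
  intro h
  simpa [h, Fin.castSucc_ne_last] using castSucc_mem_liftBlockJoin (A := A).mpr hj

lemma extendNew_restrictPartition (hP : IsSetPartition P)
    (h : blockOf P (Fin.last n) = {Fin.last n}) : extendNew (restrictPartition P) = P := by
  have hR := isSetPartition_restrictPartition hP
  refine (isSetPartition_extendNew hR).ext hP fun k => ?_
  cases k using Fin.lastCases with
  | last => rw [blockOf_extendNew_last hR, h]
  | cast j =>
    rw [blockOf_extendNew_castSucc hR, blockOf_restrictPartition hP, liftBlock_lowerBlock]
    intro hl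
    have hj := hP.mem_blockOf j.castSucc
    rw [← hP.blockOf_eq_blockOf hl, h, mem_singleton] at hj
    exact Fin.castSucc_ne_last j hj

lemma lowerBlock_blockOf_last_mem (hP : IsSetPartition P)
    (h : blockOf P (Fin.last n) ≠ {Fin.last n}) :
    lowerBlock (blockOf P (Fin.last n)) ∈ restrictPartition P := by
  obtain ⟨k, hk, hkl⟩ : ∃ k ∈ blockOf P (Fin.last n), k ≠ Fin.last n := by
    by_contra! hall
    exact h (eq_singleton_iff_unique_mem.mpr ⟨hP.mem_blockOf _, hall⟩)
  cases k using Fin.lastCases with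
  | last => exact absurd rfl hkl
  | cast j => exact mem_image.mpr ⟨j, mem_univ j, by rw [hP.blockOf_eq_blockOf hk]⟩

lemma extendJoin_restrictPartition (hP : IsSetPartition P)
    (h : blockOf P (Fin.last n) ≠ {Fin.last n}) :
    extendJoin (restrictPartition P) (lowerBlock (blockOf P (Fin.last n))) = P := by
  have hR := isSetPartition_restrictPartition hP
  have hA := lowerBlock_blockOf_last_mem hP h
  have hlast : liftBlockJoin (lowerBlock (blockOf P (Fin.last n)))
      (lowerBlock (blockOf P (Fin.last n))) = blockOf P (Fin.last n) := by
    rw [liftBlockJoin, if_pos rfl, insert_last_liftBlock_lowerBlock (hP.mem_blockOf _)]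
  refine (isSetPartition_extendJoin hR hA).ext hP fun k => ?_
  cases k using Fin.lastCases with
  | last => rw [blockOf_extendJoin_last hR hA, hlast]
  | cast j =>
    rw [blockOf_extendJoin_castSucc hR hA, blockOf_restrictPartition hP]
    by_cases hl : Fin.last n ∈ blockOf P j.castSucc
    · rw [← hP.blockOf_eq_blockOf hl, hlast]
    · have hne : lowerBlock (blockOf P j.castSucc) ≠ lowerBlock (blockOf P (Fin.last n)) := by
        intro heq
        have hj : j.castSucc ∈ blockOf P (Fin.last n) := by
          rw [← mem_lowerBlock, ← heq, mem_lowerBlock]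
          exact hP.mem_blockOf _
        rw [hP.blockOf_eq_blockOf hj] at hl
        exact hl (hP.mem_blockOf _)
      rw [liftBlockJoin, if_neg hne, liftBlock_lowerBlock hl]

end Restrict

lemma sum_setPartitions_succ {n : ℕ} {M : Type*} [AddCommMonoid M]
    (F : Finset (Finset (Fin (n + 1))) → M) :
    ∑ P ∈ SetPartitions (n + 1), F P
      = ∑ Q ∈ SetPartitions n, (F (extendNew Q) + ∑ A ∈ Q, F (extendJoin Q A)) := by
  have hsplit : ∀ Q : Finset (Finset (Fin n)), F (extendNew Q) + ∑ A ∈ Q, F (extendJoin Q A)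
      = ∑ o ∈ insertNone Q, F (o.elim (extendNew Q) (extendJoin Q)) :=
    fun Q => (sum_insertNone (fun o => F (o.elim (extendNew Q) (extendJoin Q))) Q).symm
  rw [sum_congr rfl fun Q _ => hsplit Q, sum_sigma']
  symm
  refine sum_nbij' (fun p => p.2.elim (extendNew p.1) (extendJoin p.1))
    (fun P => ⟨restrictPartition P, if blockOf P (Fin.last n) = {Fin.last n} then none
      else some (lowerBlock (blockOf P (Fin.last n)))⟩) ?_ ?_ ?_ ?_ fun _ _ => rfl
  · rintro ⟨Q, _ | A⟩ hp <;> simp only [mem_sigma, mem_insertNone, mem_setPartitions] at hp ⊢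
    · exact isSetPartition_extendNew hp.1
    · exact isSetPartition_extendJoin hp.1 (hp.2 A rfl)
  · intro P hP
    rw [mem_setPartitions] at hP
    simp only [mem_sigma, mem_setPartitions, isSetPartition_restrictPartition hP, true_and]
    split_ifs with h
    · exact none_mem_insertNone
    · exact some_mem_insertNone.mpr (lowerBlock_blockOf_last_mem hP h)
  · rintro ⟨Q, _ | A⟩ hp <;> simp only [mem_sigma, mem_insertNone, mem_setPartitions] at hp
    · simp [blockOf_extendNew_last hp.1, restrictPartition_extendNew hp.1]
    · have hA := hp.2 A rfl
      simp [blockOf_extendJoin_last hp.1 hA, restrictPartition_extendJoin hp.1 hA,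
        liftBlockJoin_self_ne_singleton (hp.1.nonempty_of_mem hA)]
  · intro P hP
    rw [mem_setPartitions] at hP
    split_ifs with h
    · exact extendNew_restrictPartition hP h
    · exact extendJoin_restrictPartition hP h

section Assignments

variable {E : Type*} [Fintype E] [Nonempty E] {β γ : Type*} [Fintype β] [Fintype γ]
  [DecidableEq β] [DecidableEq γ]
  {M : Type*} [AddCommMonoid M] {s : Finset β}

/-- The maps `s → E`, encoded as total functions equal to `Classical.arbitrary E` off `s`. -/
noncomputable def assignments (E : Type*) [Fintype E] [Nonempty E] (s : Finset β) :
    Finset (β → E) :=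
  Fintype.piFinset fun b => if b ∈ s then univ else {Classical.arbitrary E}

lemma mem_assignments {g : β → E} :
    g ∈ assignments E s ↔ ∀ b ∉ s, g b = Classical.arbitrary E := by
  simp only [assignments, Fintype.mem_piFinset]
  refine forall_congr' fun b => ?_
  split_ifs with hb <;> simp [hb]

lemma sum_pi_eq_sum_assignments (s : Finset β) (F : (β → E) → M) :
    ∑ J ∈ s.pi fun _ => (univ : Finset E),
        F (fun b => if h : b ∈ s then J b h else Classical.arbitrary E)
      = ∑ g ∈ assignments E s, F g := by
  refine sum_nbij' (fun J b => if h : b ∈ s then J b h else Classical.arbitrary E)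
    (fun g b _ => g b) ?_ ?_ ?_ ?_ fun _ _ => rfl
  · intro J _
    exact mem_assignments.mpr fun b hb => dif_neg hb
  · intro g _
    simp
  · intro J _
    ext b hb
    exact dif_pos hb
  · intro g hg
    ext b
    split_ifs with hb
    · rfl
    · exact (mem_assignments.mp hg b hb).symm

lemma sum_assignments_insert {c : β} (hc : c ∉ s) (F : (β → E) → M) :
    ∑ g ∈ assignments E (insert c s), F g
      = ∑ y : E, ∑ g ∈ assignments E s, F (Function.update g c y) := by
  rw [← sum_product' univ]
  refine sum_nbij' (fun g => (g c, Function.update g c (Classical.arbitrary E)))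
    (fun p => Function.update p.2 c p.1) ?_ ?_ ?_ ?_ ?_
  · intro g hg
    refine mem_product.mpr ⟨mem_univ _, mem_assignments.mpr fun b hb => ?_⟩
    rcases eq_or_ne b c with rfl | hbc
    · simp
    · dsimp only
      rw [Function.update_of_ne hbc]
      exact mem_assignments.mp hg b (by simp [hbc, hb])
  · rintro ⟨y, g⟩ hp
    refine mem_assignments.mpr fun b hb => ?_
    rw [mem_insert, not_or] at hb
    rw [Function.update_of_ne hb.1]
    exact mem_assignments.mp (mem_product.mp hp).2 b hb.2
  · intro g _
    simp
  · rintro ⟨y, g⟩ hp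
    have hgc := mem_assignments.mp (mem_product.mp hp).2 c hc
    simp [← hgc]
  · intro g _
    simp

lemma sum_assignments_image {φ : β → γ} {ψ : γ → β} (h : Function.LeftInverse ψ φ)
    (s : Finset β) (F : (γ → E) → M) :
    ∑ g ∈ assignments E (s.image φ), F g
      = ∑ g ∈ assignments E s,
          F (fun c => if c ∈ s.image φ then g (ψ c) else Classical.arbitrary E) := by
  symm
  refine sum_nbij' (fun g c => if c ∈ s.image φ then g (ψ c) else Classical.arbitrary E)
    (fun g b => if b ∈ s then g (φ b) else Classical.arbitrary E) ?_ ?_ ?_ ?_ fun _ _ => rfl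
  · intro g _
    exact mem_assignments.mpr fun c hc => if_neg hc
  · intro g _
    exact mem_assignments.mpr fun b hb => if_neg hb
  · intro g hg
    ext b
    split_ifs with hb
    · dsimp only
      rw [if_pos (mem_image_of_mem φ hb), h b]
    · exact (mem_assignments.mp hg b hb).symm
  · intro g hg
    ext c
    split_ifs with hc
    · obtain ⟨b, hb, rfl⟩ := mem_image.mp hc
      dsimp only
      rw [h b, if_pos hb]
    · exact (mem_assignments.mp hg c hc).symm

end Assignments

section DiagonalIntegral

variable {E : Type*} [Fintype E] [Nonempty E] (α : E → ℝ) {m n : ℕ}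

/-- The paper's `∫ (f)_P dα^{⊗|P|}`. -/
noncomputable def diagonalInt (P : Finset (Finset (Fin m))) (f : (Fin m → E) → ℝ) : ℝ :=
  ∑ g ∈ assignments E P, (∏ A ∈ P, α (g A)) * f (fun k => g (blockOf P k))

noncomputable def blockWeight (P : Finset (Finset (Fin m))) : ℝ :=
  ∏ A ∈ P, ((A.card - 1).factorial : ℝ)

lemma lamInt_eq_sum_diagonalInt (f : (Fin m → E) → ℝ) :
    lamInt α m f = ∑ P ∈ SetPartitions m, blockWeight P * diagonalInt α P f := by
  refine sum_congr rfl fun P _ => congrArg _ ?_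
  rw [diagonalInt, ← sum_pi_eq_sum_assignments]
  refine sum_congr rfl fun J _ => ?_
  rw [← prod_attach P]
  congr 1
  exact prod_congr rfl fun A _ => congrArg α (dif_pos A.2).symm

lemma diagonalInt_add (P : Finset (Finset (Fin m))) (f g : (Fin m → E) → ℝ) :
    diagonalInt α P (fun x => f x + g x) = diagonalInt α P f + diagonalInt α P g := by
  simp only [diagonalInt, mul_add, sum_add_distrib]

lemma diagonalInt_sum {ι : Type*} (P : Finset (Finset (Fin m))) (t : Finset ι)
    (f : ι → (Fin m → E) → ℝ) :
    diagonalInt α P (fun x => ∑ i ∈ t, f i x) = ∑ i ∈ t, diagonalInt α P (f i) := by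
  simp only [diagonalInt, mul_sum]
  exact sum_comm

end DiagonalIntegral

section Extension

variable {E : Type*} [Fintype E] [Nonempty E] (α : E → ℝ) {n : ℕ} {Q : Finset (Finset (Fin n))}
  {A : Finset (Fin n)}

lemma diagonalInt_extendNew (hQ : IsSetPartition Q) (f : (Fin (n + 1) → E) → ℝ) :
    diagonalInt α (extendNew Q) f = diagonalInt α Q (fun x => ∑ y, α y * f (Fin.snoc x y)) := by
  have hlast : {Fin.last n} ∉ Q.image liftBlock := singleton_last_notMem_image_liftBlock
  have key : ∀ (g : Finset (Fin n) → E) (y : E) (G : Finset (Fin (n + 1)) → E),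
      G {Fin.last n} = y → (∀ B ∈ Q, G (liftBlock B) = g B) →
      (∏ C ∈ extendNew Q, α (G C)) * f (fun k => G (blockOf (extendNew Q) k))
        = (∏ B ∈ Q, α (g B)) * (α y * f (Fin.snoc (fun j => g (blockOf Q j)) y)) := by
    intro g y G hy hG
    have htuple : (fun k => G (blockOf (extendNew Q) k))
        = Fin.snoc (fun j => g (blockOf Q j)) y := by
      funext k
      cases k using Fin.lastCases with
      | last => rw [blockOf_extendNew_last hQ, hy, Fin.snoc_last]
      | cast j => rw [blockOf_extendNew_castSucc hQ, hG _ (hQ.blockOf_mem j), Fin.snoc_castSucc]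
    rw [htuple, extendNew, prod_insert hlast, prod_image liftBlock_injective.injOn, hy,
      prod_congr rfl fun B hB => congrArg α (hG B hB)]
    ring
  calc diagonalInt α (extendNew Q) f
      = ∑ y, ∑ g ∈ assignments E Q,
          (∏ B ∈ Q, α (g B)) * (α y * f (Fin.snoc (fun j => g (blockOf Q j)) y)) := by
        rw [diagonalInt, extendNew, sum_assignments_insert hlast]
        refine sum_congr rfl fun y _ => ?_
        rw [sum_assignments_image lowerBlock_liftBlock]
        refine sum_congr rfl fun g _ => key g y _ (Function.update_self ..) fun B hB => ?_
        have hne : liftBlock B ≠ {Fin.last n} := fun h => hlast (h ▸ mem_image_of_mem _ hB)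
        rw [Function.update_of_ne hne, if_pos (mem_image_of_mem _ hB), lowerBlock_liftBlock]
    _ = diagonalInt α Q (fun x => ∑ y, α y * f (Fin.snoc x y)) := by
        rw [sum_comm]
        simp only [diagonalInt, mul_sum]

lemma diagonalInt_extendJoin (hQ : IsSetPartition Q) (hA : A ∈ Q) {j : Fin n} (hj : j ∈ A)
    (f : (Fin (n + 1) → E) → ℝ) :
    diagonalInt α (extendJoin Q A) f = diagonalInt α Q (fun x => f (Fin.snoc x (x j))) := by
  have hleft : Function.LeftInverse lowerBlock (liftBlockJoin A) := lowerBlock_liftBlockJoin A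
  have key : ∀ (g : Finset (Fin n) → E) (G : Finset (Fin (n + 1)) → E),
      (∀ B ∈ Q, G (liftBlockJoin A B) = g B) →
      (∏ C ∈ extendJoin Q A, α (G C)) * f (fun k => G (blockOf (extendJoin Q A) k))
        = (∏ B ∈ Q, α (g B)) * f (Fin.snoc (fun i => g (blockOf Q i)) (g (blockOf Q j))) := by
    intro g G hG
    have htuple : (fun k => G (blockOf (extendJoin Q A) k))
        = Fin.snoc (fun i => g (blockOf Q i)) (g (blockOf Q j)) := by
      funext k
      cases k using Fin.lastCases with
      | last => rw [blockOf_extendJoin_last hQ hA, hG A hA, Fin.snoc_last, hQ.blockOf_eq hA hj]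
      | cast i =>
        rw [blockOf_extendJoin_castSucc hQ hA, hG _ (hQ.blockOf_mem i), Fin.snoc_castSucc]
    rw [htuple, extendJoin, prod_image hleft.injective.injOn,
      prod_congr rfl fun B hB => congrArg α (hG B hB)]
  rw [diagonalInt, extendJoin, sum_assignments_image hleft]
  exact sum_congr rfl fun g _ => key g _ fun B hB => by
    rw [if_pos (mem_image_of_mem _ hB), hleft B]

lemma blockWeight_extendNew : blockWeight (extendNew Q) = blockWeight Q := by
  rw [blockWeight, extendNew, prod_insert singleton_last_notMem_image_liftBlock,
    prod_image liftBlock_injective.injOn]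
  simp [blockWeight, liftBlock]

lemma blockWeight_extendJoin (hQ : IsSetPartition Q) (hA : A ∈ Q) :
    blockWeight (extendJoin Q A) = A.card * blockWeight Q := by
  have hinj : Function.Injective (liftBlockJoin A) :=
    Function.LeftInverse.injective (lowerBlock_liftBlockJoin A)
  rw [blockWeight, extendJoin, prod_image hinj.injOn, ← mul_prod_erase Q _ hA, blockWeight,
    ← mul_prod_erase Q _ hA, ← mul_assoc]
  congr 1
  · rw [card_liftBlockJoin, if_pos rfl, Nat.add_sub_cancel,
      ← Nat.mul_factorial_pred (hQ.nonempty_of_mem hA).card_pos.ne', Nat.cast_mul]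
  · exact prod_congr rfl fun B hB => by rw [card_liftBlockJoin, if_neg (ne_of_mem_erase hB)]

lemma sum_blockWeight_mul_diagonalInt_extendJoin (hQ : IsSetPartition Q)
    (f : (Fin (n + 1) → E) → ℝ) :
    ∑ A ∈ Q, blockWeight (extendJoin Q A) * diagonalInt α (extendJoin Q A) f
      = blockWeight Q * diagonalInt α Q (fun x => ∑ i, f (Fin.snoc x (x i))) := by
  calc ∑ A ∈ Q, blockWeight (extendJoin Q A) * diagonalInt α (extendJoin Q A) f
      = ∑ A ∈ Q, blockWeight Q * ∑ j ∈ A, diagonalInt α Q (fun x => f (Fin.snoc x (x j))) :=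
        sum_congr rfl fun A hA => by
          rw [sum_congr rfl fun j hj => (diagonalInt_extendJoin α hQ hA hj f).symm, sum_const,
            nsmul_eq_mul, blockWeight_extendJoin hQ hA]
          ring
    _ = blockWeight Q * diagonalInt α Q (fun x => ∑ i, f (Fin.snoc x (x i))) := by
        rw [← mul_sum, hQ.sum_sum_blocks, diagonalInt_sum]

end Extension

theorem stmt19_general {E : Type*} [Fintype E] [Nonempty E] (α : E → ℝ)
    (n : ℕ) (B : Set (Fin (n + 1) → E)) :
    lamInt α (n + 1) (fun v => if v ∈ B then (1 : ℝ) else 0)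
      = lamInt α n (fun x =>
          (∑ y : E, α y * (if Fin.snoc x y ∈ B then (1 : ℝ) else 0))
            + ∑ i : Fin n, (if Fin.snoc x (x i) ∈ B then (1 : ℝ) else 0)) := by
  rw [lamInt_eq_sum_diagonalInt, lamInt_eq_sum_diagonalInt, sum_setPartitions_succ]
  refine sum_congr rfl fun Q hQ => ?_
  rw [mem_setPartitions] at hQ
  rw [blockWeight_extendNew, diagonalInt_extendNew α hQ,
    sum_blockWeight_mul_diagonalInt_extendJoin α hQ, ← mul_add, ← diagonalInt_add]

/-- the sequential ("Chinese restaurant") construction of `λ_n`: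
`λ_{n+1} = λ_n k_{n,n+1}`, where
`k_{n,n+1}(x₁,…,x_n; B) = ∫ 1_B(x₁,…,x_n,y) α(dy) + ∑_i 1_B(x₁,…,x_n,x_i)`. -/
theorem stmt19 {E : Type*} [Fintype E] [Nonempty E] (α : E → ℝ) (hα : ∀ e, 0 ≤ α e)
    (n : ℕ) (B : Set (Fin (n + 1) → E)) :
    lamInt α (n + 1) (fun v => if v ∈ B then (1 : ℝ) else 0)
      = lamInt α n (fun x =>
          (∑ y : E, α y * (if Fin.snoc x y ∈ B then (1 : ℝ) else 0))
            + ∑ i : Fin n, (if Fin.snoc x (x i) ∈ B then (1 : ℝ) else 0)) :=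
  stmt19_general α n B
end
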